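/- arXiv:2603.19003 — 3 statements merged into one kernel-verified Lean document; each statement's English description precedes it below -/
import Mathlib

section
/- Let (T,w,x) be a finite weighted tree having a unique optimal monomer-dimer configuration MD. For an edge e = {u,v} of T, let T_{(u,v)} and T_{(v,u)} denote the connected components of T − e containing v and u respectively (with restricted weights), and define the messages Z(u,v) := OPT(T_{(u,v)}) − OPT(T_{(u,v)} − v) and Z(v,u) := OPT(T_{(v,u)}) − OPT(T_{(v,u)} − u). Then e is a dimer of MD (i.e. e ∈ MD) if and only if w(e) > Z(u,v) + Z(v,u). -/
/-!
Deleting the edge `e = {u, v}` of the tree leaves two components with no edge between them. A matching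
that avoids `e` therefore splits into matchings of `T_(u,v)` and `T_(v,u)`, and one that contains `e`
splits into `e` and matchings of `T_(u,v) - v` and `T_(v,u) - u`. So the best configurations of the
two kinds weigh `OPT(T_(u,v)) + OPT(T_(v,u))` and `w(e) + OPT(T_(u,v) - v) + OPT(T_(v,u) - u)`, and
the unique optimum contains `e` exactly when the second is strictly larger, i.e. `w(e) > Z(u,v) + Z(v,u)`.
-/

open scoped Classical

/-- `M` is a monomer-dimer configuration (matching) of the induced weighted subgraph of `G`
on the vertex set `S`: all its edges are edges of `G` with both endpoints in `S`, and
its edges are pairwise non-adjacent. -/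
def IsMatchingOn {V : Type*} (G : SimpleGraph V) (S : Set V) (M : Finset (Sym2 V)) : Prop :=
  (∀ e ∈ M, e ∈ G.edgeSet ∧ ∀ v, v ∈ e → v ∈ S) ∧
  (∀ e ∈ M, ∀ f ∈ M, e ≠ f → ∀ v, v ∈ e → v ∉ f)

/-- The monomer-dimer weight of `M` on vertex set `S`: the sum of the edge weights of the
dimers plus the sum of the vertex weights of the monomers (vertices of `S` not covered). -/
noncomputable def MDweight {V : Type*} [Fintype V] (w : Sym2 V → ℝ) (x : V → ℝ) (S : Set V)
    (M : Finset (Sym2 V)) : ℝ :=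
  ∑ e ∈ M, w e + ∑ v ∈ Finset.univ.filter (fun v => v ∈ S ∧ ∀ e ∈ M, v ∉ e), x v

/-- `OPT G w x S` is the maximal monomer-dimer weight over matchings of the induced weighted
subgraph of `G` on `S`. -/
noncomputable def OPT {V : Type*} [Fintype V] (G : SimpleGraph V) (w : Sym2 V → ℝ)
    (x : V → ℝ) (S : Set V) : ℝ :=
  sSup {r | ∃ M, IsMatchingOn G S M ∧ MDweight w x S M = r}

/-- `M` is an optimal monomer-dimer configuration of the induced weighted subgraph on `S`. -/
def IsOptimalOn {V : Type*} [Fintype V] (G : SimpleGraph V) (w : Sym2 V → ℝ) (x : V → ℝ)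
    (S : Set V) (M : Finset (Sym2 V)) : Prop :=
  IsMatchingOn G S M ∧ ∀ M', IsMatchingOn G S M' → MDweight w x S M' ≤ MDweight w x S M

section

variable {V : Type*}

namespace IsMatchingOn

variable {G : SimpleGraph V} {S : Set V} {M : Finset (Sym2 V)}

lemma mono {H : SimpleGraph V} (hGH : G ≤ H) (hM : IsMatchingOn G S M) : IsMatchingOn H S M :=
  ⟨fun e he => ⟨SimpleGraph.edgeSet_mono hGH (hM.1 e he).1, (hM.1 e he).2⟩, hM.2⟩

lemma of_subset {S' : Set V} {M' : Finset (Sym2 V)} (hM : IsMatchingOn G S M) (hM' : M' ⊆ M)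
    (hS' : ∀ e ∈ M', ∀ a ∈ e, a ∈ S') : IsMatchingOn G S' M' :=
  ⟨fun e he => ⟨(hM.1 e (hM' he)).1, hS' e he⟩, fun e he f hf => hM.2 e (hM' he) f (hM' hf)⟩

lemma union {S₂ : Set V} {M₂ : Finset (Sym2 V)} (hM : IsMatchingOn G S M)
    (hM₂ : IsMatchingOn G S₂ M₂) (hS : Disjoint S S₂) : IsMatchingOn G (S ∪ S₂) (M ∪ M₂) := by
  constructor
  · intro e he
    rcases Finset.mem_union.mp he with h | h
    · exact ⟨(hM.1 e h).1, fun a ha => Or.inl ((hM.1 e h).2 a ha)⟩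
    · exact ⟨(hM₂.1 e h).1, fun a ha => Or.inr ((hM₂.1 e h).2 a ha)⟩
  · intro e he f hf hef a hae haf
    rcases Finset.mem_union.mp he with h | h <;> rcases Finset.mem_union.mp hf with h' | h'
    · exact hM.2 e h f h' hef a hae haf
    · exact hS.notMem_of_mem_left ((hM.1 e h).2 a hae) ((hM₂.1 f h').2 a haf)
    · exact hS.notMem_of_mem_left ((hM.1 f h').2 a haf) ((hM₂.1 e h).2 a hae)
    · exact hM₂.2 e h f h' hef a hae haf

lemma pair {u v : V} (huv : G.Adj u v) : IsMatchingOn G {u, v} {s(u, v)} := by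
  refine ⟨fun e he => ?_, fun e he f hf hef => ?_⟩
  · rw [Finset.mem_singleton.1 he]
    exact ⟨huv, fun a ha => by simpa using ha⟩
  · exact absurd ((Finset.mem_singleton.1 he).trans (Finset.mem_singleton.1 hf).symm) hef

end IsMatchingOn

lemma isMatchingOn_deleteEdges_singleton_iff {G : SimpleGraph V} {e : Sym2 V} {S : Set V}
    {M : Finset (Sym2 V)} :
    IsMatchingOn (G.deleteEdges {e}) S M ↔ IsMatchingOn G S M ∧ e ∉ M := by
  simp only [IsMatchingOn, SimpleGraph.edgeSet_deleteEdges, Set.mem_sdiff, Set.mem_singleton_iff]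
  grind

namespace IsMatchingOn

variable {G : SimpleGraph V} {S : Set V} {u v : V}

lemma erase_deleteEdges {M : Finset (Sym2 V)} (hM : IsMatchingOn G S M) (huv : s(u, v) ∈ M) :
    IsMatchingOn (G.deleteEdges {s(u, v)}) (S \ {u, v}) (M.erase s(u, v)) := by
  refine isMatchingOn_deleteEdges_singleton_iff.2
    ⟨hM.of_subset (Finset.erase_subset _ _) ?_, Finset.notMem_erase _ _⟩
  intro e he a ha
  obtain ⟨hne, heM⟩ := Finset.mem_erase.1 he
  refine ⟨(hM.1 e heM).2 a ha, fun hab => ?_⟩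
  rcases hab with rfl | rfl
  · exact hM.2 _ huv e heM hne.symm a (Sym2.mem_mk_left _ _) ha
  · exact hM.2 _ huv e heM hne.symm a (Sym2.mem_mk_right _ _) ha

lemma insert_of_deleteEdges (huv : G.Adj u v) (hu : u ∈ S) (hv : v ∈ S) {N : Finset (Sym2 V)}
    (hN : IsMatchingOn (G.deleteEdges {s(u, v)}) (S \ {u, v}) N) :
    IsMatchingOn G S (insert s(u, v) N) := by
  rw [Finset.insert_eq, ← Set.union_sdiff_cancel (Set.pair_subset hu hv)]
  exact (pair huv).union (hN.mono (G.deleteEdges_le _)) Set.disjoint_sdiff_right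

end IsMatchingOn

section Weight

variable [Fintype V] (w : Sym2 V → ℝ) (x : V → ℝ)

lemma MDweight_union {S₁ S₂ : Set V} {M₁ M₂ : Finset (Sym2 V)}
    (h₁ : ∀ e ∈ M₁, ∀ a ∈ e, a ∈ S₁) (h₂ : ∀ e ∈ M₂, ∀ a ∈ e, a ∈ S₂) (hS : Disjoint S₁ S₂) :
    MDweight w x (S₁ ∪ S₂) (M₁ ∪ M₂) = MDweight w x S₁ M₁ + MDweight w x S₂ M₂ := by
  have hM : Disjoint M₁ M₂ := Finset.disjoint_left.2 fun e he₁ he₂ =>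
    hS.notMem_of_mem_left (h₁ e he₁ _ (Sym2.out_fst_mem e)) (h₂ e he₂ _ (Sym2.out_fst_mem e))
  unfold MDweight
  simp only [Finset.sum_union hM, Finset.sum_filter]
  rw [add_add_add_comm (∑ e ∈ M₁, w e), ← Finset.sum_add_distrib]
  congr 1
  refine Finset.sum_congr rfl fun a _ => ?_
  have hd : a ∈ S₁ → a ∉ S₂ := fun h => hS.notMem_of_mem_left h
  split_ifs <;> grind

lemma MDweight_pair (u v : V) : MDweight w x {u, v} {s(u, v)} = w s(u, v) := by
  simp only [MDweight, Finset.sum_singleton, add_eq_left]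
  refine Finset.sum_eq_zero fun a ha => ?_
  simp only [Finset.mem_filter, Set.mem_insert_iff, Set.mem_singleton_iff, Finset.mem_singleton,
    forall_eq, Sym2.mem_iff] at ha
  tauto

lemma MDweight_insert {S : Set V} {u v : V} (hu : u ∈ S) (hv : v ∈ S) {N : Finset (Sym2 V)}
    (hN : ∀ e ∈ N, ∀ a ∈ e, a ∈ S \ {u, v}) :
    MDweight w x S (insert s(u, v) N) = w s(u, v) + MDweight w x (S \ {u, v}) N := by
  have hS : S = {u, v} ∪ S \ {u, v} := (Set.union_sdiff_cancel (Set.pair_subset hu hv)).symm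
  rw [Finset.insert_eq, hS, MDweight_union w x _ hN Set.disjoint_sdiff_right, MDweight_pair, ← hS]
  intro e he a ha
  rw [Finset.mem_singleton.1 he] at ha
  simpa using ha

end Weight

section Optimum

variable [Fintype V] (G : SimpleGraph V) (w : Sym2 V → ℝ) (x : V → ℝ)

lemma isGreatest_OPT (S : Set V) :
    IsGreatest {r | ∃ M, IsMatchingOn G S M ∧ MDweight w x S M = r} (OPT G w x S) := by
  have hfin : {r | ∃ M, IsMatchingOn G S M ∧ MDweight w x S M = r}.Finite :=
    (Set.finite_range (MDweight w x S)).subset fun r ⟨M, _, hM⟩ => ⟨M, hM⟩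
  have hne : {r | ∃ M, IsMatchingOn G S M ∧ MDweight w x S M = r}.Nonempty :=
    ⟨_, ∅, ⟨by simp, by simp⟩, rfl⟩
  exact ⟨hne.csSup_mem hfin, fun _ hr => le_csSup hfin.bddAbove hr⟩

lemma MDweight_le_OPT {S : Set V} {M : Finset (Sym2 V)} (hM : IsMatchingOn G S M) :
    MDweight w x S M ≤ OPT G w x S :=
  (isGreatest_OPT G w x S).2 ⟨M, hM, rfl⟩

lemma exists_isMatchingOn_MDweight_eq_OPT (S : Set V) :
    ∃ M, IsMatchingOn G S M ∧ MDweight w x S M = OPT G w x S :=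
  (isGreatest_OPT G w x S).1

theorem OPT_union {S₁ S₂ : Set V} (hS : Disjoint S₁ S₂)
    (hsep : ∀ a ∈ S₁, ∀ b ∈ S₂, ¬ G.Adj a b) :
    OPT G w x (S₁ ∪ S₂) = OPT G w x S₁ + OPT G w x S₂ := by
  refine le_antisymm ?_ ?_
  · obtain ⟨M, hM, hMw⟩ := exists_isMatchingOn_MDweight_eq_OPT G w x (S₁ ∪ S₂)
    have hside : ∀ e ∈ M, (∀ a ∈ e, a ∈ S₁) ∨ (∀ a ∈ e, a ∈ S₂) := by
      intro e he
      obtain ⟨hadj, hsub⟩ := hM.1 e he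
      induction e using Sym2.ind with
      | _ a b =>
        rcases hsub a (Sym2.mem_mk_left a b) with ha | ha <;>
          rcases hsub b (Sym2.mem_mk_right a b) with hb | hb
        · exact Or.inl (by simp [ha, hb])
        · exact absurd hadj (hsep a ha b hb)
        · exact absurd hadj.symm (hsep b hb a ha)
        · exact Or.inr (by simp [ha, hb])
    set M₁ := M.filter (fun e => ∀ a ∈ e, a ∈ S₁)
    set M₂ := M.filter (fun e => ∀ a ∈ e, a ∈ S₂)
    have hsplit : M = M₁ ∪ M₂ := by
      rw [← Finset.filter_or, Finset.filter_true_of_mem hside]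
    have hM₁ : IsMatchingOn G S₁ M₁ :=
      hM.of_subset (Finset.filter_subset _ M) fun e he => (Finset.mem_filter.1 he).2
    have hM₂ : IsMatchingOn G S₂ M₂ :=
      hM.of_subset (Finset.filter_subset _ M) fun e he => (Finset.mem_filter.1 he).2
    rw [← hMw, hsplit,
      MDweight_union w x (fun e he => (hM₁.1 e he).2) (fun e he => (hM₂.1 e he).2) hS]
    exact add_le_add (MDweight_le_OPT G w x hM₁) (MDweight_le_OPT G w x hM₂)
  · obtain ⟨M₁, hM₁, hM₁w⟩ := exists_isMatchingOn_MDweight_eq_OPT G w x S₁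
    obtain ⟨M₂, hM₂, hM₂w⟩ := exists_isMatchingOn_MDweight_eq_OPT G w x S₂
    rw [← hM₁w, ← hM₂w,
      ← MDweight_union w x (fun e he => (hM₁.1 e he).2) (fun e he => (hM₂.1 e he).2) hS]
    exact MDweight_le_OPT G w x (hM₁.union hM₂ hS)

theorem OPT_eq_add_of_not_reachable {p q : V} (hpq : ¬ G.Reachable p q)
    (hcover : ∀ a, G.Reachable p a ∨ G.Reachable q a) (S : Set V) :
    OPT G w x S =
      OPT G w x (S ∩ {a | G.Reachable p a}) + OPT G w x (S ∩ {a | G.Reachable q a}) := by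
  have hS : S = S ∩ {a | G.Reachable p a} ∪ S ∩ {a | G.Reachable q a} := by
    rw [← Set.inter_union_distrib_left, eq_comm, Set.inter_eq_left]
    exact fun a _ => hcover a
  conv_lhs => rw [hS]
  refine OPT_union G w x ?_ fun a ha b hb hab => hpq (ha.2.trans (hab.reachable.trans hb.2.symm))
  exact Set.disjoint_left.2 fun a ha hb => hpq (ha.2.trans hb.2.symm)

end Optimum

/-- Only the uniqueness of the optimum makes the inequality strict: a tie would produce a second
optimal configuration avoiding the edge. -/
theorem mem_iff_OPT_deleteEdges_lt_of_unique [Fintype V] {G : SimpleGraph V} (w : Sym2 V → ℝ)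
    (x : V → ℝ) {S : Set V} {u v : V} (huv : G.Adj u v) (hu : u ∈ S) (hv : v ∈ S)
    {MD : Finset (Sym2 V)} (hMD : IsOptimalOn G w x S MD)
    (huniq : ∀ M, IsOptimalOn G w x S M → M = MD) :
    s(u, v) ∈ MD ↔ OPT (G.deleteEdges {s(u, v)}) w x S <
      w s(u, v) + OPT (G.deleteEdges {s(u, v)}) w x (S \ {u, v}) := by
  set G' := G.deleteEdges {s(u, v)}
  obtain ⟨N, hN, hNw⟩ := exists_isMatchingOn_MDweight_eq_OPT G' w x S
  obtain ⟨hNG, huvN⟩ := isMatchingOn_deleteEdges_singleton_iff.1 hN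
  obtain ⟨N', hN', hN'w⟩ := exists_isMatchingOn_MDweight_eq_OPT G' w x (S \ {u, v})
  have hN'ins := MDweight_insert w x hu hv fun e he => (hN'.1 e he).2
  constructor
  · intro huvMD
    by_contra! hle
    have hNopt : IsOptimalOn G w x S N := by
      refine ⟨hNG, fun M hM => (hMD.2 M hM).trans ?_⟩
      have hMDerase := hMD.1.erase_deleteEdges huvMD
      rw [← Finset.insert_erase huvMD, MDweight_insert w x hu hv fun e he => (hMDerase.1 e he).2]
      linarith [MDweight_le_OPT G' w x hMDerase]
    exact huvN (huniq N hNopt ▸ huvMD)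
  · intro hlt
    by_contra huvMD
    have hMD' := isMatchingOn_deleteEdges_singleton_iff.2 ⟨hMD.1, huvMD⟩
    linarith [MDweight_le_OPT G' w x hMD', hMD.2 _ (hN'.insert_of_deleteEdges huv hu hv)]

lemma SimpleGraph.Reachable.reachable_deleteEdges_or {G : SimpleGraph V} {u v a : V}
    (h : G.Reachable u a) :
    (G.deleteEdges {s(u, v)}).Reachable u a ∨ (G.deleteEdges {s(u, v)}).Reachable v a := by
  set G' := G.deleteEdges {s(u, v)}
  have key {b c : V} (p : G.Walk b c) :
      G'.Reachable u b ∨ G'.Reachable v b → G'.Reachable u c ∨ G'.Reachable v c := by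
    induction p with
    | nil => exact id
    | @cons b c _ hbc _ ih =>
      refine fun hb => ih ?_
      by_cases he : s(b, c) = s(u, v)
      · rcases Sym2.eq_iff.1 he with ⟨-, rfl⟩ | ⟨-, rfl⟩
        · exact Or.inr .rfl
        · exact Or.inl .rfl
      · have hbc' : G'.Adj b c := SimpleGraph.deleteEdges_adj.2 ⟨hbc, he⟩
        exact hb.imp (·.trans hbc'.reachable) (·.trans hbc'.reachable)
  obtain ⟨p⟩ := h
  exact key p (Or.inl .rfl)

end

/-- For a finite weighted tree `(T,w,x)` with a unique optimal monomer-dimer configuration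
`MD` and an edge `e = {u,v}`, with `T_(u,v)` (resp. `T_(v,u)`) the component of `T - e`
containing `v` (resp. `u`) and the messages
`Z(u,v) = OPT(T_(u,v)) - OPT(T_(u,v) - v)`, `Z(v,u) = OPT(T_(v,u)) - OPT(T_(v,u) - u)`,
one has `e ∈ MD ↔ w e > Z(u,v) + Z(v,u)`. -/
theorem stmt2 {V : Type*} [Fintype V] (G : SimpleGraph V) (hT : G.IsTree)
    (w : Sym2 V → ℝ) (x : V → ℝ) (u v : V) (he : G.Adj u v)
    (MD : Finset (Sym2 V)) (hMD : IsOptimalOn G w x Set.univ MD)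
    (huniq : ∀ M, IsOptimalOn G w x Set.univ M → M = MD)
    (G' : SimpleGraph V) (hG' : G' = G.deleteEdges {s(u,v)})
    (Cuv Cvu : Set V) (hCuv : Cuv = {a | G'.Reachable v a}) (hCvu : Cvu = {a | G'.Reachable u a})
    (Zuv Zvu : ℝ)
    (hZuv : Zuv = OPT G' w x Cuv - OPT G' w x (Cuv \ {v}))
    (hZvu : Zvu = OPT G' w x Cvu - OPT G' w x (Cvu \ {u})) :
    s(u,v) ∈ MD ↔ w s(u,v) > Zuv + Zvu := by
  have hvu : ¬ G'.Reachable v u := by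
    rw [hG', SimpleGraph.reachable_comm, ← SimpleGraph.isBridge_iff]
    exact SimpleGraph.isAcyclic_iff_forall_adj_isBridge.1 hT.2 he
  have hcover (a : V) : G'.Reachable v a ∨ G'.Reachable u a :=
    hG' ▸ (hT.1.preconnected u a).reachable_deleteEdges_or.symm
  have hu : u ∉ Cuv := hCuv ▸ hvu
  have hv : v ∉ Cvu := hCvu ▸ fun h => hvu h.symm
  have hOPT := OPT_eq_add_of_not_reachable G' w x hvu hcover Set.univ
  have hOPT' := OPT_eq_add_of_not_reachable G' w x hvu hcover (Set.univ \ {u, v})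
  rw [Set.univ_inter, Set.univ_inter, ← hCuv, ← hCvu] at hOPT
  rw [← hCuv, ← hCvu, show (Set.univ \ {u, v}) ∩ Cuv = Cuv \ {v} by ext; grind,
    show (Set.univ \ {u, v}) ∩ Cvu = Cvu \ {u} by ext; grind] at hOPT'
  rw [mem_iff_OPT_deleteEdges_lt_of_unique w x he (Set.mem_univ u) (Set.mem_univ v) hMD huniq,
    ← hG', hOPT, hOPT']
  constructor <;> intro <;> linarith
end

section
/- Let (T,o) be a locally finite rooted tree with edge weights w and vertex weights x, and let H ≥ 1. If Z and Z' are H-message families on B_H(T,o) whose boundary values satisfy b(u,v) ≤ b'(u,v) for every boundary pair (u,v), then for every neighbour v of the root o: Z(o,v) ≤ Z'(o,v) when H is odd, and Z(o,v) ≥ Z'(o,v) when H is even. In other words, the messages at the root depend monotonically on the boundary conditions, increasingly for odd H and decreasingly for even H. -/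
/-!
The message update `Z ↦ max (x v) (max_{u'} (w(v,u') - Z(v,u')))` is antitone in the incoming
messages. On a tree the message on an edge pointing away from the root depends only on the
messages one level further out, so comparing two families level by level from the boundary
inwards, the direction of the inequality flips at every level: after `H - 1` flips it reaches the
edges at the root.
-/

/-- `Z` is an `H`-message family on the ball `B_H(T,o)` with boundary values `b`:
on boundary pairs (ordered pairs `(u,v)` of adjacent vertices of the ball with `v` at
distance exactly `H` from `o`), `Z(u,v) = b(u,v)`, and on every other ordered pair of
adjacent vertices of the ball, `Z(u,v) = max (x v) (max_{u' ∼ v, u' ≠ u} (w(v,u') - Z(v,u')))`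
(computed in `EReal`, with the conventions `w - (+∞) = -∞` and empty maximum `= -∞`). -/
def IsMsgFamily {V : Type*} (G : SimpleGraph V) (w : Sym2 V → ℝ) (x : V → ℝ) (o : V) (H : ℕ)
    (b : V → V → EReal) (Z : V → V → EReal) : Prop :=
  (∀ u v, G.Adj u v → G.dist o u ≤ H → G.dist o v = H → Z u v = b u v) ∧
  (∀ u v, G.Adj u v → G.dist o u ≤ H → G.dist o v < H →
    Z u v = max ((x v : ℝ) : EReal)
      (sSup {r : EReal | ∃ u', G.Adj v u' ∧ u' ≠ u ∧ G.dist o u' ≤ H ∧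
        r = ((w s(v,u') : ℝ) : EReal) - Z v u'}))

namespace SimpleGraph

variable {V : Type*} {G : SimpleGraph V}

lemma Walk.notMem_support_of_length_lt_dist {o u v : V} (p : G.Walk o u)
    (h : p.length < G.dist o v) : v ∉ p.support := by
  classical
  intro hv
  have := p.length_takeUntil_le_length hv
  exact (dist_le (p.takeUntil v hv)).not_gt (by omega)

lemma IsTree.eq_of_adj_of_dist_add_one_eq (hT : G.IsTree) {o u u' v : V} (hu : G.Adj u v)
    (hu' : G.Adj u' v) (hd : G.dist o u + 1 = G.dist o v) (hd' : G.dist o u' + 1 = G.dist o v) :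
    u = u' := by
  obtain ⟨p, hp, hpl⟩ := (hT.connected o u).exists_path_of_dist
  obtain ⟨p', hp', hpl'⟩ := (hT.connected o u').exists_path_of_dist
  have hpath := hp.concat (p.notMem_support_of_length_lt_dist (by omega)) hu
  have hpath' := hp'.concat (p'.notMem_support_of_length_lt_dist (by omega)) hu'
  have heq : p.concat hu = p'.concat hu' :=
    congrArg Subtype.val ((hT.isAcyclic.subsingleton_path o v).elim ⟨_, hpath⟩ ⟨_, hpath'⟩)
  simpa only [Walk.penultimate_concat] using congrArg Walk.penultimate heq

lemma IsTree.dist_eq_add_one_of_adj_of_ne (hT : G.IsTree) {o u u' v : V} (hu : G.Adj u v)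
    (hd : G.dist o u + 1 = G.dist o v) (hu' : G.Adj v u') (hne : u' ≠ u) :
    G.dist o u' = G.dist o v + 1 := by
  refine (hT.dist_eq_dist_add_one_of_adj o hu').resolve_left fun h => hne ?_
  exact hT.eq_of_adj_of_dist_add_one_eq hu'.symm hu h.symm hd

end SimpleGraph

namespace IsMsgFamily

variable {V : Type*} {G : SimpleGraph V} {w : Sym2 V → ℝ} {x : V → ℝ} {o : V} {H : ℕ}
  {b b' Z Z' : V → V → EReal}

lemma le_of_forall_ge (hZ : IsMsgFamily G w x o H b Z) (hZ' : IsMsgFamily G w x o H b' Z')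
    {u v : V} (huv : G.Adj u v) (hu : G.dist o u ≤ H) (hv : G.dist o v < H)
    (h : ∀ u', G.Adj v u' → u' ≠ u → G.dist o u' ≤ H → Z' v u' ≤ Z v u') :
    Z u v ≤ Z' u v := by
  rw [hZ.2 u v huv hu hv, hZ'.2 u v huv hu hv]
  refine max_le_max le_rfl (sSup_le_sSup_of_isCofinalFor ?_)
  rintro r ⟨u', hadj, hne, hle, rfl⟩
  exact ⟨_, ⟨u', hadj, hne, hle, rfl⟩, EReal.sub_le_sub le_rfl (h u' hadj hne hle)⟩

lemma le_of_boundary_le (hT : G.IsTree) (hZ : IsMsgFamily G w x o H b Z)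
    (hZ' : IsMsgFamily G w x o H b' Z')
    (hbb : ∀ u v, G.Adj u v → G.dist o u ≤ H → G.dist o v = H → b u v ≤ b' u v)
    (k : ℕ) :
    ∀ u v, G.Adj u v → G.dist o u + 1 = G.dist o v → G.dist o v + k = H →
      (Even k → Z u v ≤ Z' u v) ∧ (Odd k → Z' u v ≤ Z u v) := by
  induction k with
  | zero =>
    intro u v huv hd hk
    refine ⟨fun _ => ?_, fun hodd => absurd hodd Nat.not_odd_zero⟩
    rw [hZ.1 u v huv (by omega) (by omega), hZ'.1 u v huv (by omega) (by omega)]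
    exact hbb u v huv (by omega) (by omega)
  | succ k ih =>
    intro u v huv hd hk
    have hchild : ∀ u', G.Adj v u' → u' ≠ u →
        G.dist o v + 1 = G.dist o u' ∧ G.dist o u' + k = H :=
      fun u' hadj hne => by
        have := hT.dist_eq_add_one_of_adj_of_ne huv hd hadj hne
        omega
    constructor
    · intro heven
      refine hZ.le_of_forall_ge hZ' huv (by omega) (by omega) fun u' hadj hne _ => ?_
      exact (ih v u' hadj (hchild u' hadj hne).1 (hchild u' hadj hne).2).2
        (Nat.not_even_iff_odd.mp (Nat.even_add_one.mp heven))
    · intro hodd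
      refine hZ'.le_of_forall_ge hZ huv (by omega) (by omega) fun u' hadj hne _ => ?_
      exact (ih v u' hadj (hchild u' hadj hne).1 (hchild u' hadj hne).2).1
        (Nat.not_odd_iff_even.mp (Nat.odd_add_one.mp hodd))

end IsMsgFamily

theorem stmt7_general {V : Type*} (G : SimpleGraph V) (hT : G.IsTree)
    (w : Sym2 V → ℝ) (x : V → ℝ) (o : V) (H : ℕ) (hH : 1 ≤ H)
    (b b' Z Z' : V → V → EReal)
    (hZ : IsMsgFamily G w x o H b Z) (hZ' : IsMsgFamily G w x o H b' Z')
    (hbb : ∀ u v, G.Adj u v → G.dist o u ≤ H → G.dist o v = H → b u v ≤ b' u v) :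
    ∀ v, G.Adj o v → (Odd H → Z o v ≤ Z' o v) ∧ (Even H → Z' o v ≤ Z o v) := by
  intro v hov
  have hv : G.dist o v = 1 := SimpleGraph.dist_eq_one_iff_adj.mpr hov
  have hroot := hZ.le_of_boundary_le hT hZ' hbb (H - 1) o v hov
    (by rw [SimpleGraph.dist_self, hv]) (by omega)
  exact ⟨fun hodd => hroot.1 (Nat.Odd.sub_odd hodd odd_one),
    fun heven => hroot.2 (Nat.Even.sub_odd hH heven odd_one)⟩

/-- On a locally finite rooted weighted tree, the messages at the root depend monotonically
on the boundary conditions: if `Z` and `Z'` are `H`-message families with boundary values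
`b ≤ b'` pointwise, then for every neighbour `v` of the root, `Z(o,v) ≤ Z'(o,v)` when `H` is
odd and `Z(o,v) ≥ Z'(o,v)` when `H` is even. -/
theorem stmt7 {V : Type*} (G : SimpleGraph V) (hT : G.IsTree) (hlf : G.LocallyFinite)
    (w : Sym2 V → ℝ) (x : V → ℝ) (o : V) (H : ℕ) (hH : 1 ≤ H)
    (b b' Z Z' : V → V → EReal)
    (hZ : IsMsgFamily G w x o H b Z) (hZ' : IsMsgFamily G w x o H b' Z')
    (hbb : ∀ u v, G.Adj u v → G.dist o u ≤ H → G.dist o v = H → b u v ≤ b' u v) :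
    ∀ v, G.Adj o v → (Odd H → Z o v ≤ Z' o v) ∧ (Even H → Z' o v ≤ Z o v) :=
  stmt7_general G hT w x o H hH b b' Z Z' hZ hZ' hbb
end

section
/- Let m ∈ ℝ. Let ξ be a probability measure on ℝ with cumulative distribution function h_X satisfying ξ((−∞,m)) = 0 and h_X(t) > 0 for every t > m. Let ω be an atomless probability measure on ℝ. Let π̂ be a probability measure on ℕ₀ with π̂({0}) < 1, so that its probability generating function φ̂ is strictly increasing on [0,1] with inverse φ̂^{-1} : [φ̂(0), 1] → [0,1]; set F(u) := 1 − φ̂^{-1}(u). Let ζ_+ and ζ_- be probability measures on ℝ with cumulative distribution functions h_+ and h_- satisfying, for all t ∈ ℝ, h_+(t) = h_X(t) · φ̂( 1 − ∫ h_-(w − t) dω(w) ) and h_-(t) = h_X(t) · φ̂( 1 − ∫ h_+(w − t) dω(w) ). Then ∫ F( h_+(t) / h_X(t) ) dζ_+(t) = ∫ F( h_-(t) / h_X(t) ) dζ_-(t), where both integrands are well defined ζ_±-almost everywhere (indeed h_± ≤ h_X, so ζ_± assign no mass to the set where h_X vanishes, and the ratios lie in [φ̂(0), 1] wherever h_X >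 0). -/
/-!
Dividing the equation for `h₊` by `h_X` and applying `F` turns `F (h₊ t / h_X t)` into
`∫ h₋ (w - t) dω(w)`, so by Fubini the left-hand side is `∫ (ζ₊ ∗ ζ₋) (Iic w) dω(w)`; the right-hand
side is the same expression for `ζ₋ ∗ ζ₊`, and convolution is commutative. The division is
legitimate `ζ₊`-almost everywhere because a measure gives no mass to the set where its own
cumulative distribution function vanishes.
-/

open MeasureTheory Set Filter

theorem ae_pos_measure_Iic {α : Type*} [TopologicalSpace α] [LinearOrder α] [OrderTopology α]
    [SecondCountableTopology α] [MeasurableSpace α] (μ : Measure α) :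
    ∀ᵐ t ∂μ, 0 < μ (Iic t) := by
  simp only [pos_iff_ne_zero, ae_iff, not_not]
  refine measure_null_of_locally_null _ fun x hx => ?_
  by_cases hmax : ∃ y, μ (Iic y) = 0 ∧ x < y
  · obtain ⟨y, hy, hxy⟩ := hmax
    exact ⟨Iic y, mem_nhdsWithin_of_mem_nhds (Iic_mem_nhds hxy), hy⟩
  · refine ⟨Iic x, mem_of_superset self_mem_nhdsWithin fun y hy => ?_, hx⟩
    exact not_lt.1 fun hxy => hmax ⟨y, hy, hxy⟩

theorem measurable_measure_Iic {α : Type*} [TopologicalSpace α] [LinearOrder α] [OrderTopology α]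
    [SecondCountableTopology α] [MeasurableSpace α] [BorelSpace α] (μ : Measure α) :
    Measurable fun t => μ (Iic t) :=
  Monotone.measurable fun _ _ hab => measure_mono (Iic_subset_Iic.2 hab)

theorem norm_toReal_measure_le_one {α : Type*} [MeasurableSpace α] (μ : Measure α)
    [IsProbabilityMeasure μ] (s : Set α) : ‖(μ s).toReal‖ ≤ 1 := by
  rw [Real.norm_eq_abs, abs_of_nonneg ENNReal.toReal_nonneg]
  exact measureReal_le_one

theorem conv_apply_Iic (μ ν : Measure ℝ) [SFinite ν] (v : ℝ) :
    (μ ∗ ν) (Iic v) = ∫⁻ t, ν (Iic (v - t)) ∂μ := by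
  rw [← lintegral_indicator_one measurableSet_Iic,
    Measure.lintegral_conv (measurable_one.indicator measurableSet_Iic)]
  refine lintegral_congr fun t => ?_
  rw [← lintegral_indicator_one measurableSet_Iic]
  congr 1 with s
  simp only [indicator, mem_Iic, le_sub_iff_add_le', Pi.one_apply]

theorem integral_integral_measure_Iic_sub_eq_conv (μ ν ω : Measure ℝ) [IsFiniteMeasure μ]
    [IsProbabilityMeasure ν] [IsFiniteMeasure ω] :
    ∫ t, ∫ v, (ν (Iic (v - t))).toReal ∂ω ∂μ = ∫ v, ((μ ∗ ν) (Iic v)).toReal ∂ω := by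
  have hmeas : Measurable fun p : ℝ × ℝ => (ν (Iic (p.2 - p.1))).toReal :=
    ENNReal.measurable_toReal.comp
      ((measurable_measure_Iic ν).comp (measurable_snd.sub measurable_fst))
  have hint : Integrable (Function.uncurry fun t v => (ν (Iic (v - t))).toReal) (μ.prod ω) :=
    Integrable.of_bound hmeas.aestronglyMeasurable 1
      (ae_of_all _ fun p => norm_toReal_measure_le_one ν _)
  rw [integral_integral_swap hint]
  congr 1 with v
  rw [conv_apply_Iic]
  exact integral_toReal
    ((measurable_measure_Iic ν).comp (measurable_const.sub measurable_id)).aemeasurable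
    (ae_of_all _ fun t => measure_lt_top _ _)

theorem integral_comp_cdf_div_eq_integral_integral (ω : Measure ℝ) [IsProbabilityMeasure ω]
    (φ F : ℝ → ℝ) (hF : ∀ s ∈ Icc (0 : ℝ) 1, F (φ s) = 1 - s) (hX : ℝ → ℝ)
    (ζ ζ' : Measure ℝ) [IsFiniteMeasure ζ] [IsProbabilityMeasure ζ']
    (h : ∀ t, (ζ (Iic t)).toReal = hX t * φ (1 - ∫ v, (ζ' (Iic (v - t))).toReal ∂ω)) :
    ∫ t, F ((ζ (Iic t)).toReal / hX t) ∂ζ = ∫ t, ∫ v, (ζ' (Iic (v - t))).toReal ∂ω ∂ζ := by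
  refine integral_congr_ae ?_
  filter_upwards [ae_pos_measure_Iic ζ] with t ht
  set G := ∫ v, (ζ' (Iic (v - t))).toReal ∂ω
  have hG0 : 0 ≤ G := integral_nonneg fun v => ENNReal.toReal_nonneg
  have hG1 : G ≤ 1 := by
    have := norm_integral_le_of_norm_le_const (μ := ω) (C := 1)
      (ae_of_all _ fun v => norm_toReal_measure_le_one ζ' (Iic (v - t)))
    rwa [probReal_univ, mul_one, Real.norm_eq_abs, abs_of_nonneg hG0] at this
  have hζ : (ζ (Iic t)).toReal ≠ 0 := ENNReal.toReal_ne_zero.2 ⟨ht.ne', measure_ne_top _ _⟩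
  have hXt : hX t ≠ 0 := left_ne_zero_of_mul (h t ▸ hζ)
  rw [h t, mul_div_cancel_left₀ _ hXt, hF _ ⟨by linarith, by linarith⟩]
  ring

theorem stmt11_general (ξ ω : Measure ℝ) [IsProbabilityMeasure ω]
    (πhat : Measure ℕ)
    (F : ℝ → ℝ)
    (hF : ∀ s ∈ Set.Icc (0:ℝ) 1, F (∑' k : ℕ, (πhat {k}).toReal * s ^ k) = 1 - s)
    (ζp ζm : Measure ℝ) [IsProbabilityMeasure ζp] [IsProbabilityMeasure ζm]
    (hp : ∀ t : ℝ, (ζp (Set.Iic t)).toReal =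
      (ξ (Set.Iic t)).toReal * (∑' k : ℕ, (πhat {k}).toReal *
        (1 - ∫ v, (ζm (Set.Iic (v - t))).toReal ∂ω) ^ k))
    (hm : ∀ t : ℝ, (ζm (Set.Iic t)).toReal =
      (ξ (Set.Iic t)).toReal * (∑' k : ℕ, (πhat {k}).toReal *
        (1 - ∫ v, (ζp (Set.Iic (v - t))).toReal ∂ω) ^ k)) :
    ∫ t, F ((ζp (Set.Iic t)).toReal / (ξ (Set.Iic t)).toReal) ∂ζp =
      ∫ t, F ((ζm (Set.Iic t)).toReal / (ξ (Set.Iic t)).toReal) ∂ζm := by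
  set φ : ℝ → ℝ := fun s => ∑' k : ℕ, (πhat {k}).toReal * s ^ k
  rw [integral_comp_cdf_div_eq_integral_integral ω φ F hF _ ζp ζm hp,
    integral_comp_cdf_div_eq_integral_integral ω φ F hF _ ζm ζp hm,
    integral_integral_measure_Iic_sub_eq_conv, integral_integral_measure_Iic_sub_eq_conv, Measure.conv_comm]

/-- The invariant identity. Let `ξ` be supported on `[m,∞)` with cdf `h_X` positive on
`(m,∞)`, `ω` atomless, `π̂` a probability measure on `ℕ` with `π̂({0}) < 1` and pgf `φ̂`,
and `F` satisfying `F(φ̂(s)) = 1 - s` on `[0,1]` (i.e. `F(u) = 1 - φ̂⁻¹(u)` on `[φ̂(0),1]`).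
If `ζ₊, ζ₋` are probability measures whose cdfs `h₊, h₋` satisfy the system
`h₊(t) = h_X(t) · φ̂(1 - ∫ h₋(w-t) dω(w))` and `h₋(t) = h_X(t) · φ̂(1 - ∫ h₊(w-t) dω(w))`,
then `∫ F(h₊(t)/h_X(t)) dζ₊(t) = ∫ F(h₋(t)/h_X(t)) dζ₋(t)`. -/
theorem stmt11 (m : ℝ) (ξ ω : Measure ℝ) [IsProbabilityMeasure ξ] [IsProbabilityMeasure ω]
    (πhat : Measure ℕ) [IsProbabilityMeasure πhat]
    (hξsupp : ξ (Set.Iio m) = 0)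
    (hXpos : ∀ t : ℝ, m < t → 0 < (ξ (Set.Iic t)).toReal)
    (hωatomless : ∀ r : ℝ, ω {r} = 0)
    (hπ0 : πhat {0} < 1)
    (F : ℝ → ℝ)
    (hF : ∀ s ∈ Set.Icc (0:ℝ) 1, F (∑' k : ℕ, (πhat {k}).toReal * s ^ k) = 1 - s)
    (ζp ζm : Measure ℝ) [IsProbabilityMeasure ζp] [IsProbabilityMeasure ζm]
    (hp : ∀ t : ℝ, (ζp (Set.Iic t)).toReal =
      (ξ (Set.Iic t)).toReal * (∑' k : ℕ, (πhat {k}).toReal *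
        (1 - ∫ v, (ζm (Set.Iic (v - t))).toReal ∂ω) ^ k))
    (hm : ∀ t : ℝ, (ζm (Set.Iic t)).toReal =
      (ξ (Set.Iic t)).toReal * (∑' k : ℕ, (πhat {k}).toReal *
        (1 - ∫ v, (ζp (Set.Iic (v - t))).toReal ∂ω) ^ k)) :
    ∫ t, F ((ζp (Set.Iic t)).toReal / (ξ (Set.Iic t)).toReal) ∂ζp =
      ∫ t, F ((ζm (Set.Iic t)).toReal / (ξ (Set.Iic t)).toReal) ∂ζm :=
  stmt11_general ξ ω πhat F hF ζp ζm hp hm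
end
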